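/- Under the stated operator setting, let 2 ≤ k ≤ p, set E = span{η₁, …, η_{k−1}} and Q = span{q₁, …, q_k}, and assume the quantity D = (μ_{k−1}/μ_k) · (1 − d_2(E, Φ)²) − ⟨η_k, q_k⟩² is positive. Then for every nonzero q ∈ Q, ⟨q, T q⟩/⟨q, q⟩ ≥ μ_k · (⟨η_k, q_k⟩² − 1/D). -/

import Mathlib

open scoped RealInnerProductSpace ENNReal
open Submodule Filter

noncomputable section

variable {H : Type*} [NormedAddCommGroup H] [InnerProductSpace ℝ H] [CompleteSpace H]

/-- Orthogonal projection onto `U`, as an operator `H → H` (defined to be `0` in the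
degenerate case where `U` admits no orthogonal projection). -/
noncomputable def proj (U : Submodule ℝ H) : H →L[ℝ] H := by
  classical
  exact if h : HasOrthogonalProjection U then
    (haveI := h; U.subtypeL ∘L orthogonalProjection U)
  else 0

/-- Squared Hilbert–Schmidt norm of an operator, computed in a fixed Hilbert basis of `H`. -/
noncomputable def hsNormSq (A : H →L[ℝ] H) : ℝ≥0∞ :=
  ∑' i : (exists_hilbertBasis ℝ H).choose,
    (‖A ((exists_hilbertBasis ℝ H).choose_spec.choose i)‖₊ : ℝ≥0∞) ^ 2

/-- Hilbert–Schmidt (Frobenius) norm of an operator. -/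
noncomputable def hsNorm (A : H →L[ℝ] H) : ℝ := Real.sqrt (hsNormSq A).toReal

/-- Projection distance `d_F(U, W) = ‖P_{Wᗮ} P_U‖_F`. -/
noncomputable def dF (U W : Submodule ℝ H) : ℝ := hsNorm ((proj Wᗮ) ∘L (proj U))

/-- Gap distance `d₂(U, W) = ‖P_{Wᗮ} P_U‖₂`. -/
noncomputable def d2 (U W : Submodule ℝ H) : ℝ := ‖(proj Wᗮ) ∘L (proj U)‖

/-! The Gram–Schmidt recursion defining `q` is Mathlib's normalized Gram–Schmidt process applied
to `P_Φ η₁, P_Φ η₂, …`. Hence `span {q₁, …, q_{k-1}} = P_Φ E`, and `q_k ∈ Φ` is orthogonal to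
`P_Φ E`, hence to `E`. Write `v = a q_k + w` with `w = P_Φ e`, `e ∈ E`, and put
`c = ⟪η_k, q_k⟫`, `t = ⟪η_k, w⟫`, `X = ‖P_E w‖²`. Then
* `⟪v, T v⟫ ≥ μ_{k-1} X + μ_k (a c + t)²`, from the eigen-expansion of `T` along `η₁, …, η_k`;
* `X ≥ (1 - d₂(E, Φ)²) ‖w‖²`, since `‖e - w‖ ≤ d₂(E, Φ) ‖e‖` and `⟪e, P_E w⟫ = ‖w‖²`;
* `X + t² ≤ ‖w‖²` (Bessel) and `‖v‖² = ‖w‖² + a²`.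
What remains is an inequality between real numbers, which has a sum-of-squares proof. -/

open InnerProductSpace

section Projection

variable {V : Type*} [NormedAddCommGroup V] [InnerProductSpace ℝ V]

theorem proj_eq_starProjection (U : Submodule ℝ V) [U.HasOrthogonalProjection] :
    proj U = U.starProjection := by
  rw [proj, dif_pos ‹_›]
  rfl

theorem inner_starProjection_self (U : Submodule ℝ V) [U.HasOrthogonalProjection] (x : V) :
    ⟪x, U.starProjection x⟫ = ‖U.starProjection x‖ ^ 2 := by
  rw [← real_inner_self_eq_norm_sq, inner_starProjection_left_eq_right,
    starProjection_eq_self_iff.2 (U.starProjection_apply_mem x)]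

theorem one_sub_d2_sq_mul_norm_sq_le (U W : Submodule ℝ V) [U.HasOrthogonalProjection]
    [W.HasOrthogonalProjection] {e : V} (he : e ∈ U) :
    (1 - d2 U W ^ 2) * ‖W.starProjection e‖ ^ 2 ≤
      ‖U.starProjection (W.starProjection e)‖ ^ 2 := by
  set w := W.starProjection e
  have hdist : ‖e - w‖ ≤ d2 U W * ‖e‖ := by
    have hcomp : (proj Wᗮ ∘L proj U) e = e - w := by
      simp [proj_eq_starProjection, starProjection_eq_self_iff.2 he, w]
    calc ‖e - w‖ = ‖(proj Wᗮ ∘L proj U) e‖ := by rw [hcomp]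
      _ ≤ d2 U W * ‖e‖ := (proj Wᗮ ∘L proj U).le_opNorm e
  have hpyth : ‖e‖ ^ 2 = ‖w‖ ^ 2 + ‖e - w‖ ^ 2 := by
    simpa using norm_sq_eq_add_norm_sq_starProjection e W
  have hcs : ‖w‖ ^ 2 ≤ ‖e‖ * ‖U.starProjection w‖ := by
    have hinner : ⟪e, U.starProjection w⟫ = ‖w‖ ^ 2 := by
      rw [← inner_starProjection_left_eq_right, starProjection_eq_self_iff.2 he,
        inner_starProjection_self]
    exact hinner ▸ real_inner_le_norm _ _
  rcases (norm_nonneg e).eq_or_lt with he0 | he0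
  · have hw0 : w = 0 := by simp [w, norm_eq_zero.1 he0.symm]
    simp [hw0]
  · have hd : (1 - d2 U W ^ 2) * ‖e‖ ^ 2 ≤ ‖w‖ ^ 2 := by
      nlinarith [pow_le_pow_left₀ (norm_nonneg _) hdist 2]
    refine le_of_mul_le_mul_right ?_ (pow_pos he0 2)
    nlinarith [pow_le_pow_left₀ (by positivity) hcs 2,
      mul_le_mul_of_nonneg_left hd (sq_nonneg ‖w‖)]

end Projection

section OrthonormalFinset

variable {V : Type*} [NormedAddCommGroup V] [InnerProductSpace ℝ V]
  {ι : Type*} {s : Finset ι} {η : ι → V}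

instance finiteDimensional_span_image_finset (s : Finset ι) (η : ι → V) :
    FiniteDimensional ℝ (span ℝ (η '' s)) :=
  FiniteDimensional.span_of_finite ℝ (s.finite_toSet.image η)

theorem orthonormal_finset_of_inner_eq_ite [DecidableEq ι]
    (hη : ∀ i ∈ s, ∀ j ∈ s, ⟪η i, η j⟫ = if i = j then (1 : ℝ) else 0) :
    Orthonormal ℝ (fun i : s => η i) :=
  orthonormal_iff_ite.2 fun i j => by
    convert hη i i.2 j j.2 using 2
    exact Subtype.ext_iff

theorem Orthonormal.mono_finset {t : Finset ι} (hst : s ⊆ t)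
    (hη : Orthonormal ℝ (fun i : t => η i)) : Orthonormal ℝ (fun i : s => η i) :=
  hη.comp (fun i : s => (⟨i, hst i.2⟩ : t))
    fun _ _ h => Subtype.ext (by simpa using congrArg Subtype.val h)

theorem Orthonormal.inner_sum_smul_finset (hη : Orthonormal ℝ (fun i : s => η i)) (c : ι → ℝ)
    {j : ι} (hj : j ∈ s) : ⟪η j, ∑ i ∈ s, c i • η i⟫ = c j := by
  rw [← Finset.sum_coe_sort s]
  exact hη.inner_right_fintype (fun i => c i) ⟨j, hj⟩

theorem Orthonormal.sum_inner_sq_le_finset (hη : Orthonormal ℝ (fun i : s => η i)) (x : V) :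
    ∑ i ∈ s, ⟪η i, x⟫ ^ 2 ≤ ‖x‖ ^ 2 := by
  simpa [← Finset.sum_coe_sort s] using hη.sum_inner_products_le x (s := Finset.univ)

theorem Orthonormal.starProjection_span_finset (hη : Orthonormal ℝ (fun i : s => η i)) (x : V) :
    (span ℝ (η '' s)).starProjection x = ∑ i ∈ s, ⟪η i, x⟫ • η i := by
  refine eq_starProjection_of_mem_orthogonal
    (sum_mem fun i hi => smul_mem _ _ (subset_span ⟨i, hi, rfl⟩)) ?_
  have hortho : span ℝ {x - ∑ i ∈ s, ⟪η i, x⟫ • η i} ⟂ span ℝ (η '' s) := by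
    refine isOrtho_span.2 ?_
    rintro _ rfl _ ⟨i, hi, rfl⟩
    rw [real_inner_comm, inner_sub_right, hη.inner_sum_smul_finset _ hi, sub_self]
  exact hortho (mem_span_singleton_self _)

theorem Orthonormal.norm_sq_starProjection_span_finset (hη : Orthonormal ℝ (fun i : s => η i))
    (x : V) : ‖(span ℝ (η '' s)).starProjection x‖ ^ 2 = ∑ i ∈ s, ⟪η i, x⟫ ^ 2 := by
  rw [hη.starProjection_span_finset, ← real_inner_self_eq_norm_sq, sum_inner]
  refine Finset.sum_congr rfl fun i hi => ?_
  rw [real_inner_smul_left, hη.inner_sum_smul_finset _ hi, sq]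

theorem sum_mul_inner_sq_le_inner_apply {T : V →L[ℝ] V} (hT : ∀ x y, ⟪T x, y⟫ = ⟪x, T y⟫)
    (hTpos : ∀ u, 0 ≤ ⟪u, T u⟫) {μ : ι → ℝ} (hη : Orthonormal ℝ (fun i : s => η i))
    (hTη : ∀ i ∈ s, T (η i) = μ i • η i) (u : V) :
    ∑ i ∈ s, μ i * ⟪η i, u⟫ ^ 2 ≤ ⟪u, T u⟫ := by
  set z := ∑ i ∈ s, ⟪η i, u⟫ • η i
  have hTz : T z = ∑ i ∈ s, (μ i * ⟪η i, u⟫) • η i := by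
    simp only [z, map_sum, map_smul]
    exact Finset.sum_congr rfl fun i hi => by rw [hTη i hi, smul_smul, mul_comm]
  have hzTz : ⟪z, T z⟫ = ∑ i ∈ s, μ i * ⟪η i, u⟫ ^ 2 := by
    rw [hTz, sum_inner]
    refine Finset.sum_congr rfl fun i hi => ?_
    rw [real_inner_smul_left, hη.inner_sum_smul_finset _ hi]
    ring
  have hres : ⟪u - z, T z⟫ = 0 := by
    rw [hTz, inner_sum]
    refine Finset.sum_eq_zero fun i hi => ?_
    rw [real_inner_smul_right, real_inner_comm (η i), inner_sub_right,
      hη.inner_sum_smul_finset _ hi, sub_self, mul_zero]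
  have hu : ⟪u, T u⟫ = ⟪z, T z⟫ + 2 * ⟪u - z, T z⟫ + ⟪u - z, T (u - z)⟫ := by
    have hsymm : ⟪z, T (u - z)⟫ = ⟪u - z, T z⟫ := by rw [← hT, real_inner_comm]
    conv_lhs => rw [← add_sub_cancel z u]
    rw [map_add, inner_add_left, inner_add_right, inner_add_right, hsymm]
    ring
  linarith [hTpos (u - z)]

end OrthonormalFinset

theorem image_Icc_one_eq_image_Iio {α : Type*} {u v : ℕ → α} {m : ℕ}
    (h : ∀ j < m, u (j + 1) = v j) : u '' Set.Icc 1 m = v '' Set.Iio m := by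
  ext y
  constructor
  · rintro ⟨i, ⟨hi1, him⟩, rfl⟩
    refine ⟨i - 1, by simp only [Set.mem_Iio]; omega, ?_⟩
    rw [← h (i - 1) (by omega), Nat.sub_add_cancel hi1]
  · rintro ⟨j, hj, rfl⟩
    exact ⟨j + 1, ⟨by omega, hj⟩, h j hj⟩

theorem LinearIndependent.comp_add_one_Iic {R M : Type*} [Semiring R] [AddCommMonoid M]
    [Module R M] {g : ℕ → M} {p m : ℕ} (h : LinearIndependent R (fun i : Set.Icc 1 p => g i))
    (hm : m < p) : LinearIndependent R ((fun j => g (j + 1)) ∘ ((↑) : Set.Iic m → ℕ)) :=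
  h.comp (fun j : Set.Iic m => (⟨j + 1, by omega, (Set.mem_Iic.1 j.2).trans_lt hm⟩ : Set.Icc 1 p))
    fun _ _ h => Subtype.ext (by simpa using congrArg Subtype.val h)

section GramSchmidt

variable {V : Type*} [NormedAddCommGroup V] [InnerProductSpace ℝ V]
  {ι : Type*} [LinearOrder ι] [LocallyFiniteOrderBot ι] [WellFoundedLT ι]

theorem starProjection_span_gramSchmidt (f : ι → V) (i : ι) (x : V) :
    (ℝ ∙ gramSchmidt ℝ f i).starProjection x =
      ⟪gramSchmidtNormed ℝ f i, x⟫ • gramSchmidtNormed ℝ f i := by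
  simp only [starProjection_singleton, gramSchmidtNormed, real_inner_smul_left, smul_smul,
    Real.ringHom_apply]
  congr 1
  ring

theorem gramSchmidtNormed_mem {K : Submodule ℝ V} {f : ι → V} (hf : ∀ i, f i ∈ K) (i : ι) :
    gramSchmidtNormed ℝ f i ∈ K :=
  K.smul_mem _ <| span_le.2 (Set.image_subset_iff.2 fun j _ => hf j)
    (gramSchmidt_mem_span ℝ f le_rfl)

theorem inner_gramSchmidtNormed_eq_zero_of_mem_span {f : ι → V} {m : ι} {y : V}
    (hy : y ∈ span ℝ (f '' Set.Iio m)) : ⟪gramSchmidtNormed ℝ f m, y⟫ = 0 := by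
  rw [← span_gramSchmidt_Iio, ← span_gramSchmidtNormed] at hy
  have hortho : span ℝ {gramSchmidtNormed ℝ f m} ⟂
      span ℝ (gramSchmidtNormed ℝ f '' Set.Iio m) := by
    refine isOrtho_span.2 ?_
    rintro _ rfl _ ⟨j, hj, rfl⟩
    simp [gramSchmidtNormed, real_inner_smul_left, real_inner_smul_right,
      gramSchmidt_orthogonal ℝ f (ne_of_gt hj)]
  exact inner_left_of_mem_orthogonal hy (hortho (mem_span_singleton_self _))

/-- The coefficients may be computed against `g i` instead of `f i`: the two differ by a vector
orthogonal to `K`, which contains every `q l`. -/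
theorem eq_gramSchmidtNormed_of_recursion {K : Submodule ℝ V} {f g q : ℕ → V} {p : ℕ}
    (hf : ∀ i, f i ∈ K) (hgf : ∀ i, g i - f i ∈ Kᗮ)
    (hq : ∀ i ∈ Set.Icc 1 p, q i = ‖f i - ∑ l ∈ Finset.Ico 1 i, ⟪q l, g i⟫ • q l‖⁻¹ •
      (f i - ∑ l ∈ Finset.Ico 1 i, ⟪q l, g i⟫ • q l)) :
    ∀ j < p, q (j + 1) = gramSchmidtNormed ℝ (fun j => f (j + 1)) j := by
  intro j
  induction j using Nat.strong_induction_on with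
  | _ j ih =>
  intro hj
  have hsum : ∑ l ∈ Finset.Ico 1 (j + 1), ⟪q l, g (j + 1)⟫ • q l =
      ∑ i ∈ Finset.Iio j,
        (ℝ ∙ gramSchmidt ℝ (fun j => f (j + 1)) i).starProjection (f (j + 1)) := by
    rw [← zero_add 1, ← Finset.sum_Ico_add', Nat.Iio_eq_range, Finset.range_eq_Ico]
    refine Finset.sum_congr rfl fun i hi => ?_
    have hij : i < j := (Finset.mem_Ico.1 hi).2
    have hgf' : ⟪gramSchmidtNormed ℝ (fun j => f (j + 1)) i, g (j + 1) - f (j + 1)⟫ = 0 :=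
      inner_right_of_mem_orthogonal (gramSchmidtNormed_mem (fun _ => hf _) i) (hgf _)
    rw [ih i hij (hij.trans hj), starProjection_span_gramSchmidt, ← sub_eq_zero, ← sub_smul,
      ← inner_sub_right, hgf', zero_smul]
  have hG := gramSchmidt_def ℝ (fun j => f (j + 1)) j
  beta_reduce at hG
  rw [hq (j + 1) ⟨by omega, hj⟩, hsum, ← hG, gramSchmidtNormed]
  rfl

theorem exists_eq_smul_gramSchmidtNormed_add {f q : ℕ → V} {m : ℕ}
    (hq : ∀ j ≤ m, q (j + 1) = gramSchmidtNormed ℝ f j) {v : V}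
    (hv : v ∈ span ℝ (q '' Set.Icc 1 (m + 1))) :
    ∃ a : ℝ, ∃ w ∈ span ℝ (f '' Set.Iio m), v = a • gramSchmidtNormed ℝ f m + w := by
  rw [← Set.insert_Icc_right_eq_Icc_add_one (by omega), Set.image_insert_eq, span_insert,
    image_Icc_one_eq_image_Iio fun j hj => hq j hj.le, span_gramSchmidtNormed,
    span_gramSchmidt_Iio, hq m le_rfl] at hv
  obtain ⟨_, hy, w, hw, rfl⟩ := Submodule.mem_sup.1 hv
  obtain ⟨a, rfl⟩ := mem_span_singleton.1 hy
  exact ⟨a, w, hw, rfl⟩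

end GramSchmidt

section Rayleigh

variable {V : Type*} [NormedAddCommGroup V] [InnerProductSpace ℝ V]

theorem mul_sum_inner_sq_add_le_inner_apply {T : V →L[ℝ] V} (hT : ∀ x y, ⟪T x, y⟫ = ⟪x, T y⟫)
    (hTpos : ∀ u, 0 ≤ ⟪u, T u⟫) {η : ℕ → V} {μ : ℕ → ℝ} {m : ℕ}
    (hη : Orthonormal ℝ (fun i : Finset.Icc 1 (m + 1) => η i))
    (hTη : ∀ i ∈ Finset.Icc 1 (m + 1), T (η i) = μ i • η i)
    (hμ : ∀ i ∈ Finset.Icc 1 m, μ m ≤ μ i) (v : V) :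
    μ m * ∑ i ∈ Finset.Icc 1 m, ⟪η i, v⟫ ^ 2 + μ (m + 1) * ⟪η (m + 1), v⟫ ^ 2 ≤ ⟪v, T v⟫ :=
  calc μ m * ∑ i ∈ Finset.Icc 1 m, ⟪η i, v⟫ ^ 2 + μ (m + 1) * ⟪η (m + 1), v⟫ ^ 2
      ≤ ∑ i ∈ Finset.Icc 1 m, μ i * ⟪η i, v⟫ ^ 2 + μ (m + 1) * ⟪η (m + 1), v⟫ ^ 2 := by
        rw [Finset.mul_sum]
        gcongr with i hi
        exact hμ i hi
    _ = ∑ i ∈ Finset.Icc 1 (m + 1), μ i * ⟪η i, v⟫ ^ 2 :=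
        (Finset.sum_Icc_succ_top (by omega) _).symm
    _ ≤ ⟪v, T v⟫ := sum_mul_inner_sq_le_inner_apply hT hTpos hη hTη v

/-- Here `S = ‖w‖²`, `X = ‖P_E w‖²`, `t = ⟪η_k, w⟫`, `c = ⟪η_k, q_k⟫`, `R = μ_{k-1} / μ_k` and
`g = 1 - d₂(E, Φ)²`. -/
theorem scalar_rayleigh_bound {R g c S X t a : ℝ} (hR : 0 < R) (hc : c ^ 2 ≤ 1)
    (hD : 0 < R * g - c ^ 2) (hS : 0 ≤ S) (hX : g * S ≤ X) (ht : X + t ^ 2 ≤ S) :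
    (c ^ 2 - 1 / (R * g - c ^ 2)) * (S + a ^ 2) ≤ R * X + (a * c + t) ^ 2 := by
  set D := R * g - c ^ 2 with hDdef
  have hg : 0 < g := pos_of_mul_pos_right (by nlinarith [sq_nonneg c]) hR.le
  have hX0 : 0 ≤ X := (mul_nonneg hg.le hS).trans hX
  -- `D (a c + t)² = (c² D - 1) a² - D (c² D - 1) t² + (a + D c t)²` removes `a`.
  have key : (c ^ 2 * D - 1) * S + D * (c ^ 2 * D - 1) * t ^ 2 ≤ D * R * X := by
    rcases le_or_gt (c ^ 2 * D - 1) 0 with hθ | hθ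
    · nlinarith [mul_nonneg (mul_nonneg hD.le hR.le) hX0, mul_nonneg hD.le (sq_nonneg t)]
    · nlinarith [mul_le_mul_of_nonneg_left ht (mul_nonneg hD.le hθ.le),
        mul_le_mul_of_nonneg_left hX (mul_nonneg hD.le (add_pos hR hθ).le),
        mul_nonneg hS (mul_nonneg (sq_nonneg D) (sub_nonneg.2 hc)),
        mul_nonneg hS (mul_nonneg (mul_nonneg hD.le hg.le) hθ.le)]
  rw [← mul_le_mul_iff_of_pos_right hD]
  have hlhs : (c ^ 2 - 1 / D) * (S + a ^ 2) * D = (c ^ 2 * D - 1) * (S + a ^ 2) := by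
    field_simp
  rw [hlhs]
  nlinarith [sq_nonneg (a + D * c * t)]

theorem rayleigh_lower_bound_of_gap {T : V →L[ℝ] V} (hT : ∀ x y, ⟪T x, y⟫ = ⟪x, T y⟫)
    (hTpos : ∀ u, 0 ≤ ⟪u, T u⟫)
    {η : ℕ → V} {μ : ℕ → ℝ} {m : ℕ}
    (hη : Orthonormal ℝ (fun i : Finset.Icc 1 (m + 1) => η i))
    (hTη : ∀ i ∈ Finset.Icc 1 (m + 1), T (η i) = μ i • η i)
    (hμ : ∀ i ∈ Finset.Icc 1 m, μ m ≤ μ i) (hμm : μ (m + 1) ≤ μ m) (hμpos : 0 < μ (m + 1))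
    {Φ : Submodule ℝ V} [Φ.HasOrthogonalProjection] {x : V} (hxΦ : x ∈ Φ) (hx : ‖x‖ = 1)
    (hxE : ∀ e ∈ span ℝ (η '' Finset.Icc 1 m), ⟪x, Φ.starProjection e⟫ = 0)
    {e : V} (he : e ∈ span ℝ (η '' Finset.Icc 1 m)) (a : ℝ)
    (hD : 0 < μ m / μ (m + 1) * (1 - d2 (span ℝ (η '' Finset.Icc 1 m)) Φ ^ 2) -
      ⟪η (m + 1), x⟫ ^ 2) :
    μ (m + 1) * (⟪η (m + 1), x⟫ ^ 2 - 1 / (μ m / μ (m + 1) *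
        (1 - d2 (span ℝ (η '' Finset.Icc 1 m)) Φ ^ 2) - ⟪η (m + 1), x⟫ ^ 2)) *
      ‖a • x + Φ.starProjection e‖ ^ 2 ≤
      ⟪a • x + Φ.starProjection e, T (a • x + Φ.starProjection e)⟫ := by
  set E := span ℝ (η '' Finset.Icc 1 m)
  set w := Φ.starProjection e
  set v := a • x + w
  set c := ⟪η (m + 1), x⟫
  set t := ⟪η (m + 1), w⟫
  set X := ∑ i ∈ Finset.Icc 1 m, ⟪η i, w⟫ ^ 2
  have hxη : ∀ i ∈ Finset.Icc 1 m, ⟪η i, x⟫ = 0 := fun i hi => by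
    rw [real_inner_comm, ← starProjection_eq_self_iff.2 hxΦ, inner_starProjection_left_eq_right]
    exact hxE _ (subset_span ⟨i, hi, rfl⟩)
  have hnorm : ‖v‖ ^ 2 = ‖w‖ ^ 2 + a ^ 2 := by
    rw [norm_add_sq_real, real_inner_smul_left, hxE e he, norm_smul, hx, Real.norm_eq_abs,
      mul_one, sq_abs]
    ring
  have hspec : μ m * X + μ (m + 1) * (a * c + t) ^ 2 ≤ ⟪v, T v⟫ := by
    have hvη : ∀ i ∈ Finset.Icc 1 m, ⟪η i, v⟫ ^ 2 = ⟪η i, w⟫ ^ 2 := fun i hi => by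
      rw [inner_add_right, real_inner_smul_right, hxη i hi, mul_zero, zero_add]
    have hvtop : ⟪η (m + 1), v⟫ = a * c + t := by
      rw [inner_add_right, real_inner_smul_right]
    have h := mul_sum_inner_sq_add_le_inner_apply hT hTpos hη hTη hμ v
    rwa [Finset.sum_congr rfl hvη, hvtop] at h
  have hbessel : X + t ^ 2 ≤ ‖w‖ ^ 2 := by
    simpa [Finset.sum_Icc_succ_top (Nat.le_add_left 1 m)] using hη.sum_inner_sq_le_finset w
  have hgap : (1 - d2 E Φ ^ 2) * ‖w‖ ^ 2 ≤ X :=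
    (one_sub_d2_sq_mul_norm_sq_le E Φ he).trans_eq
      (Orthonormal.norm_sq_starProjection_span_finset
        (hη.mono_finset (Finset.Icc_subset_Icc_right m.le_succ)) w)
  have hc : c ^ 2 ≤ 1 := by
    have hcs := abs_real_inner_le_norm (η (m + 1)) x
    rw [hη.1 ⟨m + 1, Finset.mem_Icc.2 ⟨by omega, le_rfl⟩⟩, hx, one_mul] at hcs
    exact (sq_le_one_iff_abs_le_one c).2 hcs
  have hbound := scalar_rayleigh_bound (a := a) (div_pos (hμpos.trans_le hμm) hμpos) hc hD
    (sq_nonneg ‖w‖) hgap hbessel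
  calc _ = μ (m + 1) * ((c ^ 2 - 1 / (μ m / μ (m + 1) * (1 - d2 E Φ ^ 2) - c ^ 2)) *
        (‖w‖ ^ 2 + a ^ 2)) := by rw [hnorm]; ring
    _ ≤ μ (m + 1) * (μ m / μ (m + 1) * X + (a * c + t) ^ 2) :=
        mul_le_mul_of_nonneg_left hbound hμpos.le
    _ = μ m * X + μ (m + 1) * (a * c + t) ^ 2 := by field_simp
    _ ≤ ⟪v, T v⟫ := hspec

end Rayleigh

theorem stmt12_general {H : Type*} [NormedAddCommGroup H] [InnerProductSpace ℝ H]
    (T : H →L[ℝ] H)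
    (hTsa : ∀ x y : H, ⟪T x, y⟫ = ⟪x, T y⟫)
    (hTpos : ∀ u : H, 0 ≤ ⟪u, T u⟫)
    (r : ℕ) (η : ℕ → H) (μ : ℕ → ℝ)
    (hη : ∀ i ∈ Set.Icc 1 r, ∀ j ∈ Set.Icc 1 r, ⟪η i, η j⟫ = if i = j then (1 : ℝ) else 0)
    (hTeig : ∀ i ∈ Set.Icc 1 r, T (η i) = μ i • η i)
    (hμmono : ∀ i ∈ Set.Icc 1 (r + 1), ∀ j ∈ Set.Icc 1 (r + 1), i ≤ j → μ j ≤ μ i)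
    (hμr : 0 < μ r)
    (n : ℕ) (Φ : Submodule ℝ H) (hΦfd : FiniteDimensional ℝ Φ)
    (hlin : LinearIndependent ℝ (fun i : Set.Icc 1 (min n r) => proj Φ (η i.1)))
    (q : ℕ → H)
    (hq : ∀ i ∈ Set.Icc 1 (min n r),
      q i = ‖proj Φ (η i) - ∑ l ∈ Finset.Ico 1 i, ⟪q l, η i⟫ • q l‖⁻¹ •
            (proj Φ (η i) - ∑ l ∈ Finset.Ico 1 i, ⟪q l, η i⟫ • q l))
    (k : ℕ) (hk2 : 2 ≤ k) (hkp : k ≤ min n r)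
    (hD : 0 < (μ (k - 1) / μ k) * (1 - d2 (span ℝ (η '' Set.Icc 1 (k - 1))) Φ ^ 2) -
      ⟪η k, q k⟫ ^ 2) :
    ∀ v ∈ span ℝ (q '' Set.Icc 1 k), v ≠ 0 →
      μ k * (⟪η k, q k⟫ ^ 2 -
          1 / ((μ (k - 1) / μ k) * (1 - d2 (span ℝ (η '' Set.Icc 1 (k - 1))) Φ ^ 2) -
            ⟪η k, q k⟫ ^ 2)) ≤
        ⟪v, T v⟫ / ⟪v, v⟫ := by
  intro v hv hv0
  obtain ⟨m, rfl⟩ : ∃ m, k = m + 1 := ⟨k - 1, by omega⟩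
  have hmr : m + 1 ≤ r := hkp.trans (min_le_right n r)
  have hIcc : ∀ i ∈ Finset.Icc 1 (m + 1), i ∈ Set.Icc 1 r := fun i hi => by
    simp only [Finset.mem_Icc, Set.mem_Icc] at hi ⊢; omega
  have := hΦfd
  simp only [proj_eq_starProjection] at hq hlin
  set f : ℕ → H := fun j => Φ.starProjection (η (j + 1))
  have hqN : ∀ j < min n r, q (j + 1) = gramSchmidtNormed ℝ f j :=
    eq_gramSchmidtNormed_of_recursion (fun i => Φ.starProjection_apply_mem (η i))
      (fun i => sub_starProjection_mem_orthogonal (η i)) hq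
  have hfE : span ℝ (f '' Set.Iio m) =
      (span ℝ (η '' Finset.Icc 1 m)).map (Φ.starProjection : H →ₗ[ℝ] H) := by
    rw [Submodule.map_span, Set.image_image, Finset.coe_Icc,
      image_Icc_one_eq_image_Iio (v := f) fun j _ => rfl]
  obtain ⟨a, _, hw, rfl⟩ := exists_eq_smul_gramSchmidtNormed_add (fun j hj => hqN j (by omega)) hv
  rw [hfE] at hw
  obtain ⟨e, he, rfl⟩ := Submodule.mem_map.1 hw
  have hηk : Orthonormal ℝ (fun i : Finset.Icc 1 (m + 1) => η i) :=
    orthonormal_finset_of_inner_eq_ite fun i hi j hj => hη i (hIcc i hi) j (hIcc j hj)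
  have hμk : ∀ i ∈ Finset.Icc 1 m, μ m ≤ μ i := fun i hi => by
    simp only [Finset.mem_Icc] at hi
    exact hμmono i ⟨by omega, by omega⟩ m ⟨by omega, by omega⟩ hi.2
  have hq1 : ‖gramSchmidtNormed ℝ f m‖ = 1 :=
    gramSchmidtNormed_unit_length_coe m
      (hlin.comp_add_one_Iic (g := fun i => Φ.starProjection (η i)) (by omega))
  rw [le_div_iff₀ (real_inner_self_pos.2 hv0), real_inner_self_eq_norm_sq]
  simp only [Nat.add_sub_cancel, ← Finset.coe_Icc, hqN m (by omega), ContinuousLinearMap.coe_coe]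
    at hD ⊢
  exact rayleigh_lower_bound_of_gap hTsa hTpos hηk (fun i hi => hTeig i (hIcc i hi)) hμk
    (hμmono m ⟨by omega, by omega⟩ (m + 1) ⟨by omega, by omega⟩ (by omega))
    (hμr.trans_le (hμmono (m + 1) ⟨by omega, by omega⟩ r ⟨by omega, by omega⟩ hmr))
    (gramSchmidtNormed_mem (K := Φ) (fun j => Φ.starProjection_apply_mem (η (j + 1))) m) hq1
    (fun e he => inner_gramSchmidtNormed_eq_zero_of_mem_span (hfE ▸ mem_map_of_mem he)) he a hD

/-- With `E = span{η₁..η_{k−1}}`, `Q = span{q₁..q_k}` and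
`D = (μ_{k−1}/μ_k)(1 − d₂(E,Φ)²) − ⟨η_k, q_k⟩² > 0`, every nonzero `v ∈ Q` satisfies
`⟨v, T v⟩/⟨v, v⟩ ≥ μ_k (⟨η_k, q_k⟩² − 1/D)`. -/
theorem stmt12 {H : Type*} [NormedAddCommGroup H] [InnerProductSpace ℝ H] [CompleteSpace H]
    (T : H →L[ℝ] H)
    (hTsa : ∀ x y : H, ⟪T x, y⟫ = ⟪x, T y⟫)
    (hTpos : ∀ u : H, 0 ≤ ⟪u, T u⟫)
    (r : ℕ) (hr : 1 ≤ r) (η : ℕ → H) (μ : ℕ → ℝ)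
    (hη : ∀ i ∈ Set.Icc 1 r, ∀ j ∈ Set.Icc 1 r, ⟪η i, η j⟫ = if i = j then (1 : ℝ) else 0)
    (hTeig : ∀ i ∈ Set.Icc 1 r, T (η i) = μ i • η i)
    (hμmono : ∀ i ∈ Set.Icc 1 (r + 1), ∀ j ∈ Set.Icc 1 (r + 1), i ≤ j → μ j ≤ μ i)
    (hμr : 0 < μ r) (hμr1 : 0 ≤ μ (r + 1))
    (hTinv : ∀ w ∈ (span ℝ (η '' Set.Icc 1 r))ᗮ, T w ∈ (span ℝ (η '' Set.Icc 1 r))ᗮ)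
    (hTres : ∀ w ∈ (span ℝ (η '' Set.Icc 1 r))ᗮ, ⟪w, T w⟫ ≤ μ (r + 1) * ‖w‖ ^ 2)
    (n : ℕ) (Φ : Submodule ℝ H) (hΦfd : FiniteDimensional ℝ Φ) (hΦn : Module.finrank ℝ Φ = n)
    (hlin : LinearIndependent ℝ (fun i : Set.Icc 1 (min n r) => proj Φ (η i.1)))
    (q : ℕ → H)
    (hq : ∀ i ∈ Set.Icc 1 (min n r),
      q i = ‖proj Φ (η i) - ∑ l ∈ Finset.Ico 1 i, ⟪q l, η i⟫ • q l‖⁻¹ •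
            (proj Φ (η i) - ∑ l ∈ Finset.Ico 1 i, ⟪q l, η i⟫ • q l))
    (k : ℕ) (hk2 : 2 ≤ k) (hkp : k ≤ min n r)
    (hD : 0 < (μ (k - 1) / μ k) * (1 - d2 (span ℝ (η '' Set.Icc 1 (k - 1))) Φ ^ 2) -
      ⟪η k, q k⟫ ^ 2) :
    ∀ v ∈ span ℝ (q '' Set.Icc 1 k), v ≠ 0 →
      μ k * (⟪η k, q k⟫ ^ 2 -
          1 / ((μ (k - 1) / μ k) * (1 - d2 (span ℝ (η '' Set.Icc 1 (k - 1))) Φ ^ 2) -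
            ⟪η k, q k⟫ ^ 2)) ≤
        ⟪v, T v⟫ / ⟪v, v⟫ :=
  stmt12_general T hTsa hTpos r η μ hη hTeig hμmono hμr n Φ hΦfd hlin q hq k hk2 hkp hD

end
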